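/- Let Σ ⊂ ℝ^d = ℝ^{d−1} × ℝ be a cylindric set with base Π ⊂ ℝ^{d−1} of positive Lebesgue measure, and let Γ ⊂ ℝ^{d−1} be a countable set such that E(Γ) is a Riesz basis in L²(Π). Then there exists a constant M = M(Π, Γ) such that for every f ∈ L²(Σ), ‖f‖²_{L²(Σ)} ≤ M ∑_{(γ,n) ∈ Γ × ℤ} |⟨f, e_{(γ,n)}⟩_{L²(Σ)}|², where e_{(γ,n)}(x,y) = e^{2πi⟨γ,x⟩} e^{2πi n y}. -/

import Mathlib

open MeasureTheory Complex
open scoped RealInnerProductSpace Pointwise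

noncomputable section

/-- A family of vectors in a Hilbert space is a *Riesz basis* if it is the image of an
orthonormal (Hilbert) basis under a bounded invertible linear operator. -/
def IsRieszBasis {H : Type*} [NormedAddCommGroup H] [InnerProductSpace ℂ H] {ι : Type*}
    (f : ι → H) : Prop :=
  ∃ (e : HilbertBasis ι ℂ H) (T : H ≃L[ℂ] H), ∀ i, f i = T (e i)

/-- The exponential function `e_λ(x) = e^{2πi⟨λ,x⟩}` on `ℝ^d`. -/
def expFun {d : ℕ} (l : EuclideanSpace ℝ (Fin d)) : EuclideanSpace ℝ (Fin d) → ℂ :=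
  fun x => Complex.exp (2 * Real.pi * Complex.I * ((⟪ l, x ⟫ : ℝ) : ℂ))

open scoped Classical in
/-- The exponential `e_λ` regarded as an element of `L²(Ω)`. -/
def expLp {d : ℕ} (Ω : Set (EuclideanSpace ℝ (Fin d))) (l : EuclideanSpace ℝ (Fin d)) :
    Lp ℂ 2 (volume.restrict Ω) :=
  if h : MemLp (expFun l) 2 (volume.restrict Ω) then h.toLp _ else 0

/-- A cylindric set `S ⊆ ℝ^{m} × ℝ` with base `B ⊆ ℝ^{m}`: over every point of the
bounded measurable base `B`, the fiber of `S` is an interval `[φ x, φ x + 1]` of length one,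
where `φ` is a bounded measurable function on `B`. -/
def IsCylindric {m : ℕ} (S : Set (EuclideanSpace ℝ (Fin m) × ℝ))
    (B : Set (EuclideanSpace ℝ (Fin m))) : Prop :=
  Bornology.IsBounded S ∧ MeasurableSet S ∧ Bornology.IsBounded B ∧ MeasurableSet B ∧
    ∃ φ : EuclideanSpace ℝ (Fin m) → ℝ, Measurable φ ∧ (∃ C : ℝ, ∀ x ∈ B, |φ x| ≤ C) ∧
      S = {p | p.1 ∈ B ∧ φ p.1 ≤ p.2 ∧ p.2 ≤ φ p.1 + 1}

open scoped Classical in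
/-- The exponential `e_{(γ,n)}(x,y) = e^{2πi⟨γ,x⟩} e^{2πiny}` as an element of `L²(S)`,
for `S ⊆ ℝ^{m} × ℝ`. -/
def expLpProd {m : ℕ} (S : Set (EuclideanSpace ℝ (Fin m) × ℝ))
    (γ : EuclideanSpace ℝ (Fin m)) (n : ℤ) : Lp ℂ 2 (volume.restrict S) :=
  if h : MemLp (fun p : EuclideanSpace ℝ (Fin m) × ℝ =>
      Complex.exp (2 * Real.pi * Complex.I * (((⟪ γ, p.1 ⟫ : ℝ) + (n : ℝ) * p.2 : ℝ) : ℂ)))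
      2 (volume.restrict S)
  then h.toLp _ else 0

/-
For `f ∈ L²(Σ)` and `x ∈ Π`, let `g_n(x)` be the `n`-th Fourier coefficient of `f(x, ·)` on the unit
fibre `[φ x, φ x + 1]`. Parseval on every fibre and Tonelli give `‖f‖² = ∑_n ‖g_n‖²_{L²(Π)}`, and
Fubini gives `⟨f, e_{(γ,n)}⟩_{L²(Σ)} = ⟨g_n, e_γ⟩_{L²(Π)}`. Writing `e_γ = T b_γ` with `(b_γ)` an
orthonormal basis, `∑_γ |⟨g, e_γ⟩|² = ‖T* g‖²` lies between `‖(T*)⁻¹‖⁻² ‖g‖²` and `‖T*‖² ‖g‖²`.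
The lower bound applied to every `g_n` and summed over `n` is the claim; the upper bound makes the
double series converge.
-/

open Set Filter ComplexConjugate
open scoped ENNReal NNReal Real

section L2

variable {α E : Type*} [MeasurableSpace α] {μ : Measure α} [NormedAddCommGroup E]

lemma eLpNorm_two_sq_eq_lintegral (f : α → E) : eLpNorm f 2 μ ^ 2 = ∫⁻ x, ‖f x‖ₑ ^ 2 ∂μ := by
  simpa using eLpNorm_nnreal_pow_eq_lintegral (f := f) (μ := μ) (p := 2) two_ne_zero

lemma memLp_two_of_lintegral_enorm_sq_ne_top {f : α → E} (hf : AEStronglyMeasurable f μ)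
    (h : ∫⁻ x, ‖f x‖ₑ ^ 2 ∂μ ≠ ∞) : MemLp f 2 μ := by
  refine ⟨hf, ?_⟩
  rw [← eLpNorm_two_sq_eq_lintegral] at h
  simpa [ENNReal.pow_lt_top_iff] using h.lt_top

lemma MeasureTheory.Lp.enorm_sq_eq_lintegral (f : Lp E 2 μ) : ‖f‖ₑ ^ 2 = ∫⁻ x, ‖f x‖ₑ ^ 2 ∂μ := by
  rw [Lp.enorm_def, eLpNorm_two_sq_eq_lintegral]

end L2

theorem tsum_enorm_sq_integral_exp_mul_Icc {a : ℝ} {g : ℝ → ℂ}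
    (hg : MemLp g 2 (volume.restrict (Icc a (a + 1)))) :
    ∑' n : ℤ, ‖∫ y in Icc a (a + 1), cexp (-(2 * π * I * n * y)) * g y‖ₑ ^ 2 =
      ∫⁻ y in Icc a (a + 1), ‖g y‖ₑ ^ 2 := by
  have hab : a < a + 1 := lt_add_one a
  rw [← restrict_Ioc_eq_restrict_Icc] at hg ⊢
  have hcoeff : ∀ n : ℤ, fourierCoeffOn hab g n =
      ∫ y in Ioc a (a + 1), cexp (-(2 * π * I * n * y)) * g y := fun n => by
    rw [fourierCoeffOn_eq_integral, intervalIntegral.integral_of_le hab.le]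
    simp only [add_sub_cancel_left, div_one, one_smul, fourier_coe_apply]
    refine setIntegral_congr_fun measurableSet_Ioc fun y _ => ?_
    push_cast
    ring_nf
  have h := hasSum_sq_fourierCoeffOn hab hg
  simp only [hcoeff, add_sub_cancel_left, inv_one, one_smul,
    intervalIntegral.integral_of_le hab.le] at h
  have hint : Integrable (fun y => ‖g y‖ ^ 2) (volume.restrict (Ioc a (a + 1))) :=
    hg.integrable_norm_pow (p := 2) two_ne_zero
  have hsq : ∀ z : ℂ, ‖z‖ₑ ^ 2 = ENNReal.ofReal (‖z‖ ^ 2) := fun z => by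
    rw [ENNReal.ofReal_pow (norm_nonneg _), ofReal_norm]
  simp_rw [hsq]
  rw [← ENNReal.ofReal_tsum_of_nonneg (fun _ => by positivity) h.summable, h.tsum_eq,
    ofReal_integral_eq_lintegral_ofReal hint (ae_of_all _ fun _ => by positivity)]

section Slicing

variable {X Y : Type*} [MeasurableSpace X] [MeasurableSpace Y] {μ : Measure X} {ν : Measure Y}
  [SFinite ν] {T : Set (X × Y)}

lemma setLIntegral_prod_eq_lintegral_preimage (hT : MeasurableSet T) {h : X × Y → ℝ≥0∞}
    (hh : Measurable h) :
    ∫⁻ p in T, h p ∂(μ.prod ν) = ∫⁻ x, ∫⁻ y in Prod.mk x ⁻¹' T, h (x, y) ∂ν ∂μ := by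
  rw [← lintegral_indicator hT, lintegral_prod _ (hh.indicator hT).aemeasurable]
  congr! 2 with x
  rw [← lintegral_indicator (measurable_prodMk_left hT)]
  rfl

lemma setIntegral_prod_eq_integral_preimage {E : Type*} [NormedAddCommGroup E]
    [NormedSpace ℝ E] [SFinite μ] (hT : MeasurableSet T) {h : X × Y → E}
    (hh : IntegrableOn h T (μ.prod ν)) :
    ∫ p in T, h p ∂(μ.prod ν) = ∫ x, ∫ y in Prod.mk x ⁻¹' T, h (x, y) ∂ν ∂μ := by
  rw [← integral_indicator hT, integral_prod _ ((integrable_indicator_iff hT).2 hh)]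
  congr! 2 with x
  rw [← integral_indicator (measurable_prodMk_left hT)]
  rfl

lemma StronglyMeasurable.setIntegral_prod_preimage {E : Type*} [NormedAddCommGroup E]
    [NormedSpace ℝ E] (hT : MeasurableSet T) {h : X × Y → E} (hh : StronglyMeasurable h) :
    StronglyMeasurable fun x => ∫ y in Prod.mk x ⁻¹' T, h (x, y) ∂ν := by
  convert (hh.indicator hT).integral_prod_right' (ν := ν) using 2 with x
  rw [← integral_indicator (measurable_prodMk_left hT)]
  rfl

lemma Measurable.setLIntegral_prod_preimage (hT : MeasurableSet T) {h : X × Y → ℝ≥0∞}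
    (hh : Measurable h) : Measurable fun x => ∫⁻ y in Prod.mk x ⁻¹' T, h (x, y) ∂ν := by
  convert (hh.indicator hT).lintegral_prod_right' (ν := ν) using 2 with x
  rw [← lintegral_indicator (measurable_prodMk_left hT)]
  rfl

end Slicing

section UnitCylinder

variable {X : Type*} [MeasurableSpace X] {μ : Measure X} {B : Set X} {φ : X → ℝ}

def unitCylinder (B : Set X) (φ : X → ℝ) : Set (X × ℝ) :=
  {p | p.1 ∈ B ∧ φ p.1 ≤ p.2 ∧ p.2 ≤ φ p.1 + 1}

lemma measurableSet_unitStrip (hφ : Measurable φ) :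
    MeasurableSet {p : X × ℝ | φ p.1 ≤ p.2 ∧ p.2 ≤ φ p.1 + 1} :=
  (measurableSet_le (hφ.comp measurable_fst) measurable_snd).inter
    (measurableSet_le measurable_snd ((hφ.comp measurable_fst).add_const 1))

lemma restrict_prod_unitCylinder [SFinite μ] (hφ : Measurable φ) (ν : Measure ℝ)
    [SFinite ν] :
    (μ.prod ν).restrict (unitCylinder B φ) =
      ((μ.restrict B).prod ν).restrict {p | φ p.1 ≤ p.2 ∧ p.2 ≤ φ p.1 + 1} := by
  have : unitCylinder B φ = {p : X × ℝ | φ p.1 ≤ p.2 ∧ p.2 ≤ φ p.1 + 1} ∩ B ×ˢ univ := by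
    ext p
    simp [unitCylinder, and_comm]
  rw [this, ← Measure.restrict_restrict (measurableSet_unitStrip hφ),
    ← Measure.restrict_univ (μ := ν), Measure.prod_restrict, Measure.restrict_univ]

lemma setLIntegral_unitCylinder [SFinite μ] (hφ : Measurable φ)
    {h : X × ℝ → ℝ≥0∞} (hh : Measurable h) :
    ∫⁻ p in unitCylinder B φ, h p ∂(μ.prod volume) =
      ∫⁻ x in B, (∫⁻ y in Icc (φ x) (φ x + 1), h (x, y)) ∂μ := by
  rw [restrict_prod_unitCylinder hφ,
    setLIntegral_prod_eq_lintegral_preimage (measurableSet_unitStrip hφ) hh]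
  rfl

lemma setIntegral_unitCylinder [SFinite μ] (hφ : Measurable φ)
    {h : X × ℝ → ℂ} (hh : IntegrableOn h (unitCylinder B φ) (μ.prod volume)) :
    ∫ p in unitCylinder B φ, h p ∂(μ.prod volume) =
      ∫ x in B, (∫ y in Icc (φ x) (φ x + 1), h (x, y)) ∂μ := by
  rw [IntegrableOn, restrict_prod_unitCylinder hφ] at hh
  rw [restrict_prod_unitCylinder hφ,
    setIntegral_prod_eq_integral_preimage (measurableSet_unitStrip hφ) hh]
  rfl

def fiberFourierCoeff (φ : X → ℝ) (F : X × ℝ → ℂ) (n : ℤ) (x : X) : ℂ :=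
  ∫ y in Icc (φ x) (φ x + 1), cexp (-(2 * π * I * n * y)) * F (x, y)

lemma stronglyMeasurable_fiberFourierCoeff (hφ : Measurable φ) {F : X × ℝ → ℂ}
    (hF : StronglyMeasurable F) (n : ℤ) : StronglyMeasurable (fiberFourierCoeff φ F n) := by
  have hexp : Measurable fun p : X × ℝ => cexp (-(2 * π * I * n * p.2)) := by fun_prop
  exact StronglyMeasurable.setIntegral_prod_preimage (measurableSet_unitStrip hφ)
    (hexp.stronglyMeasurable.mul hF)

theorem lintegral_enorm_sq_unitCylinder_eq_tsum [SFinite μ] (hφ : Measurable φ)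
    {F : X × ℝ → ℂ} (hF : StronglyMeasurable F)
    (hfin : ∫⁻ p in unitCylinder B φ, ‖F p‖ₑ ^ 2 ∂(μ.prod volume) ≠ ∞) :
    ∫⁻ p in unitCylinder B φ, ‖F p‖ₑ ^ 2 ∂(μ.prod volume) =
      ∑' n : ℤ, ∫⁻ x in B, ‖fiberFourierCoeff φ F n x‖ₑ ^ 2 ∂μ := by
  have hmeas : Measurable fun p => ‖F p‖ₑ ^ 2 := hF.measurable.enorm.pow_const 2
  rw [setLIntegral_unitCylinder hφ hmeas] at hfin ⊢
  rw [← lintegral_tsum fun n =>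
    ((stronglyMeasurable_fiberFourierCoeff hφ hF n).measurable.enorm.pow_const 2).aemeasurable]
  refine lintegral_congr_ae ?_
  have hfiber_meas := hmeas.setLIntegral_prod_preimage (ν := volume) (measurableSet_unitStrip hφ)
  filter_upwards [ae_lt_top' hfiber_meas.aemeasurable hfin] with x hx
  have hfiber : MemLp (fun y => F (x, y)) 2 (volume.restrict (Icc (φ x) (φ x + 1))) :=
    memLp_two_of_lintegral_enorm_sq_ne_top
      (hF.comp_measurable measurable_prodMk_left).aestronglyMeasurable hx.ne
  exact (tsum_enorm_sq_integral_exp_mul_Icc hfiber).symm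

theorem setIntegral_unitCylinder_conj_mul_exp [SFinite μ] (hφ : Measurable φ)
    {F : X × ℝ → ℂ} {u : X → ℂ} (n : ℤ)
    (hint : IntegrableOn (fun p => conj (F p) * (u p.1 * cexp (2 * π * I * n * p.2)))
      (unitCylinder B φ) (μ.prod volume)) :
    ∫ p in unitCylinder B φ, conj (F p) * (u p.1 * cexp (2 * π * I * n * p.2)) ∂(μ.prod volume) =
      ∫ x in B, conj (fiberFourierCoeff φ F n x) * u x ∂μ := by
  rw [setIntegral_unitCylinder hφ hint]
  congr 1 with x
  rw [fiberFourierCoeff, ← integral_conj, ← integral_mul_const]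
  congr 1 with y
  simp only [map_mul, ← Complex.exp_conj, map_neg, map_ofNat, Complex.conj_ofReal, Complex.conj_I,
    map_intCast]
  ring_nf

theorem exists_fiberFourier_decomposition [SFinite μ] (hφ : Measurable φ)
    (f : Lp ℂ 2 ((μ.prod volume).restrict (unitCylinder B φ))) :
    ∃ G : ℤ → Lp ℂ 2 (μ.restrict B), ‖f‖ₑ ^ 2 = ∑' n, ‖G n‖ₑ ^ 2 ∧
      ∀ (n : ℤ) (u : X → ℂ) (U : Lp ℂ 2 (μ.restrict B))
        (V : Lp ℂ 2 ((μ.prod volume).restrict (unitCylinder B φ))),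
        U =ᵐ[μ.restrict B] u →
        V =ᵐ[(μ.prod volume).restrict (unitCylinder B φ)]
          (fun p => u p.1 * cexp (2 * π * I * n * p.2)) →
        inner ℂ f V = inner ℂ (G n) U := by
  have hc := stronglyMeasurable_fiberFourierCoeff hφ (Lp.stronglyMeasurable f)
  have hnorm : ‖f‖ₑ ^ 2 = ∑' n : ℤ, ∫⁻ x in B, ‖fiberFourierCoeff φ f n x‖ₑ ^ 2 ∂μ := by
    rw [Lp.enorm_sq_eq_lintegral]
    refine lintegral_enorm_sq_unitCylinder_eq_tsum hφ (Lp.stronglyMeasurable f) ?_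
    rw [← Lp.enorm_sq_eq_lintegral]
    finiteness
  have hfin : ∑' n : ℤ, ∫⁻ x in B, ‖fiberFourierCoeff φ f n x‖ₑ ^ 2 ∂μ ≠ ∞ := by
    rw [← hnorm]
    finiteness
  have hmem : ∀ n, MemLp (fiberFourierCoeff φ f n) 2 (μ.restrict B) := fun n =>
    memLp_two_of_lintegral_enorm_sq_ne_top (hc n).aestronglyMeasurable <|
      ne_top_of_le_ne_top hfin (ENNReal.le_tsum n)
  refine ⟨fun n => (hmem n).toLp, ?_, fun n u U V hU hV => ?_⟩
  · simp_rw [Lp.enorm_toLp, eLpNorm_two_sq_eq_lintegral, hnorm]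
  have hV' : (fun p => inner ℂ (f p) (V p)) =ᵐ[(μ.prod volume).restrict (unitCylinder B φ)]
      fun p => conj (f p) * (u p.1 * cexp (2 * π * I * n * p.2)) := by
    filter_upwards [hV] with p hp
    rw [RCLike.inner_apply', hp]
  rw [L2.inner_def, L2.inner_def, integral_congr_ae hV',
    setIntegral_unitCylinder_conj_mul_exp hφ n ((L2.integrable_inner f V).congr hV')]
  refine integral_congr_ae ?_
  filter_upwards [(hmem n).coeFn_toLp, hU] with x hGx hUx
  rw [RCLike.inner_apply', hGx, hUx]

end UnitCylinder

section RieszBasis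

variable {ι H : Type*} [NormedAddCommGroup H] [InnerProductSpace ℂ H]

lemma HilbertBasis.tsum_enorm_inner_sq (e : HilbertBasis ι ℂ H) (g : H) :
    ∑' i, ‖inner ℂ g (e i)‖ₑ ^ 2 = ‖g‖ₑ ^ 2 := by
  have h := lp.hasSum_norm (p := 2) (by norm_num) (e.repr g)
  simp only [ENNReal.toReal_ofNat, Real.rpow_two, LinearIsometryEquiv.norm_map] at h
  have h' : HasSum (fun i => ‖inner ℂ g (e i)‖₊ ^ 2) (‖g‖₊ ^ 2) := by
    rw [← NNReal.hasSum_coe]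
    push_cast
    convert h using 2 with i
    rw [e.repr_apply_apply, ← inner_conj_symm, RCLike.norm_conj]
  simp only [enorm_eq_nnnorm, ← ENNReal.coe_pow, ← ENNReal.coe_tsum h'.summable, h'.tsum_eq]

theorem IsRieszBasis.exists_frame_bounds [CompleteSpace H] {v : ι → H} (hv : IsRieszBasis v) :
    ∃ A B : ℝ≥0, ∀ g : H, ‖g‖ₑ ^ 2 ≤ A * ∑' i, ‖inner ℂ g (v i)‖ₑ ^ 2 ∧
      ∑' i, ‖inner ℂ g (v i)‖ₑ ^ 2 ≤ B * ‖g‖ₑ ^ 2 := by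
  obtain ⟨e, T, rfl⟩ : ∃ (e : HilbertBasis ι ℂ H) (T : H ≃L[ℂ] H), v = fun i => T (e i) := by
    obtain ⟨e, T, hT⟩ := hv
    exact ⟨e, T, funext hT⟩
  set T' := ContinuousLinearMap.adjoint (T : H →L[ℂ] H)
  set S' := ContinuousLinearMap.adjoint (T.symm : H →L[ℂ] H)
  have hsum : ∀ g, ∑' i, ‖inner ℂ g (T (e i))‖ₑ ^ 2 = ‖T' g‖ₑ ^ 2 := fun g => by
    simp_rw [← e.tsum_enorm_inner_sq, T', ContinuousLinearMap.adjoint_inner_left]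
    rfl
  have hinv : ∀ g, S' (T' g) = g := fun g => by
    rw [← ContinuousLinearMap.comp_apply, ← ContinuousLinearMap.adjoint_comp]
    simp [ContinuousLinearMap.adjoint_id]
  refine ⟨‖S'‖₊ ^ 2, ‖T'‖₊ ^ 2, fun g => ⟨?_, ?_⟩⟩
  · calc ‖g‖ₑ ^ 2 = ‖S' (T' g)‖ₑ ^ 2 := by rw [hinv]
      _ ≤ (‖S'‖ₑ * ‖T' g‖ₑ) ^ 2 := by gcongr; exact S'.le_opENorm _
      _ = _ := by rw [hsum, mul_pow, enorm_eq_nnnorm S', ENNReal.coe_pow]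
  · calc ∑' i, ‖inner ℂ g (T (e i))‖ₑ ^ 2 = ‖T' g‖ₑ ^ 2 := hsum g
      _ ≤ (‖T'‖ₑ * ‖g‖ₑ) ^ 2 := by gcongr; exact T'.le_opENorm _
      _ = _ := by rw [mul_pow, enorm_eq_nnnorm T', ENNReal.coe_pow]

theorem IsRieszBasis.exists_toReal_tsum_le_mul_tsum_prod [CompleteSpace H] {κ : Type*}
    {v : ι → H} (hv : IsRieszBasis v) :
    ∃ A : ℝ, ∀ G : κ → H, ∑' n, ‖G n‖ₑ ^ 2 ≠ ∞ →
      (∑' n, ‖G n‖ₑ ^ 2).toReal ≤ A * ∑' q : ι × κ, ‖inner ℂ (G q.2) (v q.1)‖ ^ 2 := by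
  obtain ⟨A, B, hAB⟩ := hv.exists_frame_bounds
  refine ⟨A, fun G hG => ?_⟩
  have hprod : ∑' q : ι × κ, ‖inner ℂ (G q.2) (v q.1)‖ₑ ^ 2 =
      ∑' n, ∑' i, ‖inner ℂ (G n) (v i)‖ₑ ^ 2 := by
    rw [ENNReal.tsum_prod', ENNReal.tsum_comm]
  have hlower : ∑' n, ‖G n‖ₑ ^ 2 ≤ A * ∑' q : ι × κ, ‖inner ℂ (G q.2) (v q.1)‖ₑ ^ 2 := by
    rw [hprod, ← ENNReal.tsum_mul_left]
    exact ENNReal.tsum_le_tsum fun n => (hAB (G n)).1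
  have hupper : ∑' q : ι × κ, ‖inner ℂ (G q.2) (v q.1)‖ₑ ^ 2 ≤ B * ∑' n, ‖G n‖ₑ ^ 2 := by
    rw [hprod, ← ENNReal.tsum_mul_left]
    exact ENNReal.tsum_le_tsum fun n => (hAB (G n)).2
  have hfin := ne_top_of_le_ne_top (ENNReal.mul_ne_top ENNReal.coe_ne_top hG) hupper
  calc (∑' n, ‖G n‖ₑ ^ 2).toReal
      ≤ (A * ∑' q : ι × κ, ‖inner ℂ (G q.2) (v q.1)‖ₑ ^ 2).toReal :=
        ENNReal.toReal_mono (ENNReal.mul_ne_top ENNReal.coe_ne_top hfin) hlower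
    _ = A * ∑' q : ι × κ, ‖inner ℂ (G q.2) (v q.1)‖ ^ 2 := by
        rw [ENNReal.toReal_mul, ENNReal.tsum_toReal_eq fun _ => by finiteness]
        simp

end RieszBasis

section Exponentials

variable {d : ℕ}

lemma norm_expFun (l x : EuclideanSpace ℝ (Fin d)) : ‖expFun l x‖ = 1 := by
  simp [expFun, Complex.norm_exp]

lemma coeFn_expLp {Ω : Set (EuclideanSpace ℝ (Fin d))} (hΩ : volume Ω ≠ ∞)
    (l : EuclideanSpace ℝ (Fin d)) : expLp Ω l =ᵐ[volume.restrict Ω] expFun l := by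
  have : IsFiniteMeasure (volume.restrict Ω) := isFiniteMeasure_restrict.2 hΩ
  have hmem : MemLp (expFun l) 2 (volume.restrict Ω) :=
    MemLp.of_bound (by unfold expFun; fun_prop) 1 (ae_of_all _ fun x => (norm_expFun l x).le)
  rw [expLp, dif_pos hmem]
  exact hmem.coeFn_toLp

lemma coeFn_expLpProd {S : Set (EuclideanSpace ℝ (Fin d) × ℝ)} (hS : volume S ≠ ∞)
    (γ : EuclideanSpace ℝ (Fin d)) (n : ℤ) :
    expLpProd S γ n =ᵐ[volume.restrict S] fun p => expFun γ p.1 * cexp (2 * π * I * n * p.2) := by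
  have : IsFiniteMeasure (volume.restrict S) := isFiniteMeasure_restrict.2 hS
  have hsplit : (fun p : EuclideanSpace ℝ (Fin d) × ℝ =>
      cexp (2 * π * I * (((inner ℝ γ p.1 : ℝ) + (n : ℝ) * p.2 : ℝ) : ℂ))) =
      fun p => expFun γ p.1 * cexp (2 * π * I * n * p.2) := by
    ext p
    rw [expFun, ← Complex.exp_add]
    push_cast
    ring_nf
  have hmem : MemLp (fun p : EuclideanSpace ℝ (Fin d) × ℝ =>
      expFun γ p.1 * cexp (2 * π * I * n * p.2)) 2 (volume.restrict S) :=
    MemLp.of_bound (by unfold expFun; fun_prop) 1 (ae_of_all _ fun p => by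
      simp [norm_expFun, Complex.norm_exp])
  have hmem_def := hsplit ▸ hmem
  rw [expLpProd, dif_pos hmem_def]
  exact hmem_def.coeFn_toLp.trans (EventuallyEq.of_eq hsplit)

end Exponentials

theorem cylindric_sampling_bound_general
    (m : ℕ) (S : Set (EuclideanSpace ℝ (Fin m) × ℝ)) (B : Set (EuclideanSpace ℝ (Fin m)))
    (hcyl : IsCylindric S B)
    (Γ : Set (EuclideanSpace ℝ (Fin m)))
    (hbasis : IsRieszBasis (fun γ : Γ => expLp B (γ : EuclideanSpace ℝ (Fin m)))) :
    ∃ M : ℝ, ∀ f : Lp ℂ 2 (volume.restrict S),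
      ‖f‖ ^ 2 ≤ M * ∑' q : Γ × ℤ,
        ‖(inner ℂ f (expLpProd S (q.1 : EuclideanSpace ℝ (Fin m)) q.2) : ℂ)‖ ^ 2 := by
  obtain ⟨hSb, -, hBb, -, φ, hφ, -, rfl⟩ := hcyl
  obtain ⟨A, hA⟩ := hbasis.exists_toReal_tsum_le_mul_tsum_prod (κ := ℤ)
  refine ⟨A, fun f => ?_⟩
  obtain ⟨G, hG_norm, hG_inner⟩ := exists_fiberFourier_decomposition (B := B) hφ f
  have hinner : ∀ q : Γ × ℤ, inner ℂ f (expLpProd _ q.1 q.2) = inner ℂ (G q.2) (expLp B q.1) :=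
    fun q => hG_inner q.2 _ _ _ (coeFn_expLp hBb.measure_lt_top.ne q.1)
      (coeFn_expLpProd hSb.measure_lt_top.ne q.1 q.2)
  calc ‖f‖ ^ 2 = (‖f‖ₑ ^ 2).toReal := by simp
    _ ≤ A * ∑' q : Γ × ℤ, ‖inner ℂ (G q.2) (expLp B q.1)‖ ^ 2 :=
        hG_norm ▸ hA G (hG_norm ▸ by finiteness)
    _ = _ := by simp_rw [hinner]

theorem cylindric_sampling_bound
    (m : ℕ) (S : Set (EuclideanSpace ℝ (Fin m) × ℝ)) (B : Set (EuclideanSpace ℝ (Fin m)))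
    (hcyl : IsCylindric S B) (hB : 0 < volume B)
    (Γ : Set (EuclideanSpace ℝ (Fin m))) (hΓ : Γ.Countable)
    (hbasis : IsRieszBasis (fun γ : Γ => expLp B (γ : EuclideanSpace ℝ (Fin m)))) :
    ∃ M : ℝ, ∀ f : Lp ℂ 2 (volume.restrict S),
      ‖f‖ ^ 2 ≤ M * ∑' q : Γ × ℤ,
        ‖(inner ℂ f (expLpProd S (q.1 : EuclideanSpace ℝ (Fin m)) q.2) : ℂ)‖ ^ 2 :=
  cylindric_sampling_bound_general m S B hcyl Γ hbasis
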